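/- arXiv:2006.13576 — 7 statements merged into one kernel-verified Lean document; each statement's English description precedes it below -/
import Mathlib

section
/- For any Lyndon word v, there is no Lyndon word w that can be written as w = xyz where x is a non-empty suffix of v and z is a non-empty prefix of v (and y is an arbitrary, possibly empty, string), with x a proper prefix of w. Equivalently, a Lyndon word cannot begin inside one occurrence of v and end inside a later occurrence of v. -/
/-!
Compare everything with `w = x ++ y ++ z` in the lexicographic order: `v ≤ x` because `x` is a
non-empty suffix of the Lyndon word `v`, `x < w` because `x` is a proper prefix of `w`, `w < z`
because `z` is a non-empty proper suffix of the Lyndon word `w`, and `z ≤ v` because `z` is a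
prefix of `v`. Hence `v < v`.
-/

/-- A non-empty string is a Lyndon word if it is lexicographically smaller than
all of its non-empty proper suffixes. -/
def IsLyndon {α : Type*} [LinearOrder α] (w : List α) : Prop :=
  w ≠ [] ∧ ∀ s : List α, s <:+ w → s ≠ [] → s ≠ w → List.Lex (· < ·) w s

theorem List.lt_append_of_ne_nil {α : Type*} [LinearOrder α] (s : List α) {t : List α}
    (ht : t ≠ []) : s < s ++ t := by
  obtain ⟨a, t, rfl⟩ := List.exists_cons_of_ne_nil ht
  simpa using List.append_left_lt (l₁ := s) (List.nil_lt_cons a t)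

namespace IsLyndon

variable {α : Type*} [LinearOrder α] {w s : List α}

theorem lt_of_isSuffix (hw : IsLyndon w) (hs : s <:+ w) (hs₀ : s ≠ []) (hsw : s ≠ w) : w < s :=
  hw.2 s hs hs₀ hsw

theorem le_of_isSuffix (hw : IsLyndon w) (hs : s <:+ w) (hs₀ : s ≠ []) : w ≤ s := by
  rcases eq_or_ne s w with rfl | hsw
  · exact le_rfl
  · exact (hw.lt_of_isSuffix hs hs₀ hsw).le

end IsLyndon

/-- For any Lyndon word `v`, there is no Lyndon word `w = x ++ y ++ z` with `x` a
non-empty suffix of `v`, `z` a non-empty prefix of `v`, and `x` a proper prefix of `w`. -/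
theorem lyndon_cannot_cross_occurrences {α : Type*} [LinearOrder α]
    (v : List α) (hv : IsLyndon v) :
    ¬ ∃ x y z : List α, x ≠ [] ∧ z ≠ [] ∧ x <:+ v ∧ z <+: v ∧
        x ≠ x ++ y ++ z ∧ IsLyndon (x ++ y ++ z) := by
  rintro ⟨x, y, z, hx, hz, hxv, hzv, -, hw⟩
  have hzw : z ≠ x ++ y ++ z := fun h => by
    have := congrArg List.length h
    simp only [List.length_append] at this
    exact hx (List.length_eq_zero_iff.1 (by omega))
  refine lt_irrefl v ?_
  calc v ≤ x := hv.le_of_isSuffix hxv hx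
    _ < x ++ (y ++ z) := x.lt_append_of_ne_nil (by simp [hz])
    _ = x ++ y ++ z := (List.append_assoc x y z).symm
    _ < z := hw.lt_of_isSuffix (List.suffix_append _ _) hz hzw
    -- `IsPrefix.le` is stated for core's `≤` on lists, which unfolds to `¬ v < z`.
    _ ≤ v := not_lt.1 hzv.le
end

section
/- (Three Squares Lemma) Let u², v², w² be three squares that are all prefixes of some common string, such that w is primitive and |u| > |v| > |w|. Then |u| ≥ |v| + |w|. -/
/-- `listPow x k` is the `k`-th power `xᵏ` of the string `x`. -/
def listPow {α : Type*} (x : List α) (k : ℕ) : List α := (List.replicate k x).flatten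

/-- A string is primitive if it is not a proper power: there are no `x` and `k ≥ 2`
with `w = xᵏ`. -/
def IsPrimitiveWord {α : Type*} (w : List α) : Prop :=
  ¬ ∃ (x : List α) (k : ℕ), 2 ≤ k ∧ w = listPow x k

/-!
Write `n < N < M` for `|w|, |v|, |u|` and suppose `M < N + n`, i.e. `d = M - N < n`.
Overlapping `u²` with `v²` gives the prefix of length `N` the period `d`; overlapping `v²` with
`w²` gives `w` the period `e = N - n`; and the periods `d` and `n` give the prefix of length `N - d`
the period `n - d`. The Fine–Wilf theorem (`List.HasPeriod.gcd`) then produces a period of `w`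
that is a proper divisor of `n`: `gcd d n` if `d ≤ e`, and `gcd (gcd e (n - d)) d` if `e < d`.
So `w` is a proper power.
-/

namespace List

variable {α : Type*} {w t : List α} {p q r k L L' : ℕ}

lemma hasPeriod_append_self (s : List α) : HasPeriod (s ++ s) s.length := by
  simp [HasPeriod]

lemma HasPeriod.take (h : HasPeriod w p) (L : ℕ) : HasPeriod (w.take L) p :=
  h.infix (take_prefix L w).isInfix

lemma HasPeriod.take_of_le (h : HasPeriod (t.take L) p) (hL : L' ≤ L) :
    HasPeriod (t.take L') p := by
  simpa [take_take, min_eq_left hL] using h.take L'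

lemma IsPrefix.hasPeriod_take {s : List α} (h : s ++ s <+: t)
    (hL : L ≤ 2 * s.length) : HasPeriod (t.take L) s.length := by
  have hs : t.take (2 * s.length) = s ++ s := by
    rw [prefix_iff_eq_take.mp h]; simp [two_mul]
  exact (hs ▸ hasPeriod_append_self s : HasPeriod (t.take (2 * s.length)) s.length).take_of_le hL

lemma HasPeriod.take_sub_of_add (hq : HasPeriod (t.take L) q) (hkq : HasPeriod (t.take L) (k + q))
    (hL : L ≤ t.length) : HasPeriod (t.take (L - q)) k := by
  have h := hq.drop_of_hasPeriod_add hkq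
  rwa [prefix_iff_eq_take.mp hq.drop_prefix, length_drop, length_take, take_take,
    min_eq_left hL, min_eq_left (Nat.sub_le L q)] at h

lemma HasPeriod.of_take (hp : HasPeriod w p) (hp0 : 0 < p) (hq : HasPeriod (w.take p) q)
    (hqp : q ∣ p) : HasPeriod w q := by
  have hq0 : 0 < q := Nat.pos_of_dvd_of_pos hqp hp0
  rw [hasPeriod_iff_forall_getElem?_mod] at hp hq ⊢
  intro i hi
  have hip : i % p < (w.take p).length := by
    simp only [length_take]; exact lt_min (Nat.mod_lt i hp0) (lt_of_le_of_lt (Nat.mod_le i p) hi)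
  rw [hp i hi, ← getElem?_take_of_lt (Nat.mod_lt i hp0), hq _ hip, Nat.mod_mod_of_dvd i hqp,
    getElem?_take_of_lt (lt_of_lt_of_le (Nat.mod_lt i hq0) (Nat.le_of_dvd hp0 hqp))]

lemma HasPeriod.gcd_of_take (hp : HasPeriod w p) (hp0 : 0 < p)
    (hr : HasPeriod (w.take (p + r)) r) (hpr : p + r ≤ w.length) : HasPeriod w (Nat.gcd p r) := by
  have h := (hp.take (p + r)).gcd hr (by simp; omega)
  refine hp.of_take hp0 ?_ (Nat.gcd_dvd_left p r)
  simpa [take_take] using h.take p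

lemma IsPrefix.hasPeriod_take_length_sub {u v : List α} (hu : u ++ u <+: t) (hv : v ++ v <+: t)
    (hvu : v.length ≤ u.length) : HasPeriod (t.take v.length) (u.length - v.length) := by
  have hM : HasPeriod (t.take (2 * v.length)) (u.length - v.length + v.length) := by
    rw [Nat.sub_add_cancel hvu]; exact hu.hasPeriod_take (by omega)
  have h := (hv.hasPeriod_take le_rfl).take_sub_of_add hM (by simpa [two_mul] using hv.length_le)
  rwa [show 2 * v.length - v.length = v.length by omega] at h

theorem exists_period_lt_dvd_of_three_square_prefixes {u v : List α} (hu : u ++ u <+: t)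
    (hv : v ++ v <+: t) (hw : w ++ w <+: t) (huv : v.length < u.length)
    (hvw : w.length < v.length) (hsum : u.length < v.length + w.length) :
    ∃ g < w.length, g ∣ w.length ∧ HasPeriod w g := by
  set n := w.length
  set N := v.length
  set d := u.length - N with hd
  set e := N - n with he
  have hw_eq : w = t.take n := prefix_iff_eq_take.mp ((prefix_append w w).trans hw)
  have hlen : 2 * u.length ≤ t.length := by simpa [two_mul] using hu.length_le
  have hper_d : HasPeriod (t.take N) d := hu.hasPeriod_take_length_sub hv huv.le
  rw [hw_eq]
  rcases le_or_gt d e with hde | hed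
  · have h := (hper_d.take_of_le (L' := n + d) (by omega)).gcd
      (hw.hasPeriod_take (by omega)) (by simp; omega)
    exact ⟨Nat.gcd d n, (Nat.gcd_le_left n (by omega)).trans_lt (by omega),
      Nat.gcd_dvd_right _ _, h.take_of_le (by omega)⟩
  · have hper_e : HasPeriod (t.take n) e := hv.hasPeriod_take_length_sub hw hvw.le
    have hper_nd : HasPeriod (t.take (N - d)) (n - d) := hper_d.take_sub_of_add (k := n - d)
      (by rw [Nat.sub_add_cancel (by omega)]; exact hw.hasPeriod_take (by omega)) (by omega)
    set h := Nat.gcd e (n - d)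
    have hper_h : HasPeriod (t.take n) h := hper_e.gcd_of_take (by omega)
      (by rw [take_take, min_eq_left (by omega)]; exact hper_nd.take_of_le (by omega))
      (by simp; omega)
    have hh_le : h ≤ n - d := Nat.le_of_dvd (by omega) (Nat.gcd_dvd_right _ _)
    refine ⟨Nat.gcd h d, (Nat.gcd_le_right _ (by omega)).trans_lt (by omega), ?_,
      hper_h.gcd (hper_d.take_of_le (by omega)) (by simp; omega)⟩
    have hdvd := Nat.dvd_add ((Nat.gcd_dvd_left h d).trans (Nat.gcd_dvd_right e _))
      (Nat.gcd_dvd_right h d)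
    rwa [Nat.sub_add_cancel (by omega)] at hdvd

end List

section listPow

variable {α : Type*}

lemma listPow_succ (x : List α) (k : ℕ) : listPow x (k + 1) = x ++ listPow x k := by
  simp [listPow, List.replicate_succ]

lemma length_listPow (x : List α) (k : ℕ) : (listPow x k).length = k * x.length := by
  simp [listPow, List.sum_replicate]

lemma getElem?_listPow (x : List α) {k i : ℕ} (hi : i < k * x.length) :
    (listPow x k)[i]? = x[i % x.length]? := by
  induction k generalizing i with
  | zero => simp at hi
  | succ k ih =>
    rw [listPow_succ]
    rcases lt_or_ge i x.length with hix | hix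
    · rw [List.getElem?_append_left hix, Nat.mod_eq_of_lt hix]
    · rw [List.getElem?_append_right hix, ih (by rw [Nat.succ_mul] at hi; omega),
        ← Nat.mod_eq_sub_mod hix]

lemma List.HasPeriod.eq_listPow {w : List α} {p : ℕ} (h : w.HasPeriod p)
    (hp : 0 < p) (hpw : p ∣ w.length) : w = listPow (w.take p) (w.length / p) := by
  apply List.ext_getElem?
  intro i
  rcases lt_or_ge i w.length with hi | hi
  · have hx : (w.take p).length = p := by simp [Nat.le_of_dvd (by omega) hpw]
    rw [getElem?_listPow _ (by rwa [hx, Nat.div_mul_cancel hpw]), hx,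
      List.getElem?_take_of_lt (Nat.mod_lt i hp),
      List.hasPeriod_iff_forall_getElem?_mod.mp h i hi]
  · rw [List.getElem?_eq_none hi, List.getElem?_eq_none]
    calc (listPow (w.take p) (w.length / p)).length
        = w.length / p * min p w.length := by rw [length_listPow, List.length_take]
      _ ≤ w.length / p * p := Nat.mul_le_mul_left _ (min_le_left _ _)
      _ ≤ i := (Nat.div_mul_le_self _ _).trans hi

lemma List.HasPeriod.not_isPrimitiveWord {w : List α} {p : ℕ} (h : w.HasPeriod p)
    (hpw : p ∣ w.length) (hlt : p < w.length) : ¬ IsPrimitiveWord w := by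
  obtain ⟨m, hm⟩ := hpw
  have hp : 0 < p := Nat.pos_of_ne_zero (by rintro rfl; omega)
  have hm2 : 2 ≤ m := by
    by_contra! hm2
    interval_cases m <;> omega
  refine fun hprim => hprim ⟨w.take p, m, hm2, ?_⟩
  simpa [hm, Nat.mul_div_cancel_left m hp] using h.eq_listPow hp ⟨m, hm⟩

end listPow

/-- Three Squares Lemma: if `u²`, `v²`, `w²` are prefixes of a common string `t`,
`w` is primitive, and `|u| > |v| > |w|`, then `|u| ≥ |v| + |w|`. -/
theorem three_squares_lemma {α : Type*} (t u v w : List α)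
    (hu : u ++ u <+: t) (hv : v ++ v <+: t) (hw : w ++ w <+: t)
    (hwprim : IsPrimitiveWord w)
    (huv : v.length < u.length) (hvw : w.length < v.length) :
    v.length + w.length ≤ u.length := by
  by_contra! hsum
  obtain ⟨g, hgw, hgdvd, hg⟩ :=
    List.exists_period_lt_dvd_of_three_square_prefixes hu hv hw huv hvw hsum
  exact hg.not_isPrimitiveWord hgdvd hgw hwprim
end

section
/- Let u² and v² be squares such that v² is a proper substring of u² whose occurrence starts strictly before the occurrence of the L-root interval r_{u²} of u². Then r_{u²} is not a substring of v², and either the L-root interval r_{v²} of v² is a prefix of r_{u²} (their occurrences start at the same position and r_{v²} is a prefix of r_{u²} as a string), or the occurrence of r_{v²} ends strictly before the occurrence of r_{u²} starts. -/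
/-- `p` is a period of `w` (0-indexed): `1 ≤ p ≤ |w|` and `w[i] = w[i+p]` whenever
both are defined. -/
def IsPeriodOf {α : Type*} (w : List α) (p : ℕ) : Prop :=
  1 ≤ p ∧ p ≤ w.length ∧ ∀ i : ℕ, i + p < w.length → w[i]? = w[i + p]?

/-- `p` is the smallest period of `w`. -/
def IsLeastPeriod {α : Type*} (w : List α) (p : ℕ) : Prop :=
  IsPeriodOf w p ∧ ∀ q : ℕ, IsPeriodOf w q → p ≤ q

set_option linter.unusedSectionVars false

namespace TwoSqAux

variable {α : Type*}

theorem listPow_length (x : List α) (k : ℕ) : (listPow x k).length = k * x.length := by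
  simp [listPow]

theorem listPow_succ (x : List α) (k : ℕ) : listPow x (k+1) = x ++ listPow x k := by
  simp [listPow, List.replicate_succ]

theorem listPow_getElem? (x : List α) (k i : ℕ) (hi : i < k * x.length) :
    (listPow x k)[i]? = x[i % x.length]? := by
  induction k generalizing i with
  | zero => simp at hi
  | succ k ih =>
    have hi' : i < k * x.length + x.length := by rw [Nat.succ_mul] at hi; exact hi
    rw [listPow_succ]
    by_cases h : i < x.length
    · rw [List.getElem?_append, if_pos h, Nat.mod_eq_of_lt h]
    · push_neg at h
      have h2 : i - x.length < k * x.length := by omega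
      rw [List.getElem?_append, if_neg (by omega), ih (i - x.length) h2]
      congr 1
      conv_rhs => rw [show i = (i - x.length) + x.length by omega]
      rw [Nat.add_mod_right]

section Lex
variable [LinearOrder α]

theorem lex_asymm : ∀ {x y : List α}, List.Lex (· < ·) x y → List.Lex (· < ·) y x → False := by
  intro x y h1
  induction h1 with
  | nil => intro h2; cases h2
  | rel h => intro h2; cases h2 with
    | rel h' => exact absurd h' (lt_asymm h)
    | cons h' => exact absurd h (lt_irrefl _)
  | cons h ih => intro h2; cases h2 with
    | rel h' => exact absurd h' (lt_irrefl _)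
    | cons h' => exact ih h'

theorem lex_of_prefix : ∀ {x y : List α}, x <+: y → x ≠ y → List.Lex (· < ·) x y := by
  intro x
  induction x with
  | nil =>
    intro y _ hne
    cases y with
    | nil => exact absurd rfl hne
    | cons a l => exact List.Lex.nil
  | cons a l ih =>
    intro y hp hne
    obtain ⟨t, rfl⟩ := hp
    exact List.Lex.cons (ih ⟨t, rfl⟩ (by
      intro h
      apply hne
      rw [List.cons_append]
      exact congrArg (List.cons a) h))

theorem lex_mismatch {x y : List α} (h : List.Lex (· < ·) x y) (hl : y.length ≤ x.length) :
    ∃ t, t < y.length ∧ (∀ i, i < t → x[i]? = y[i]?) ∧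
      ∃ a b, x[t]? = some a ∧ y[t]? = some b ∧ a < b := by
  induction h with
  | nil => simp at hl
  | @rel a l₁ b l₂ h =>
    exact ⟨0, by simp, by omega, a, b, by simp, by simp, h⟩
  | @cons a l₁ l₂ h ih =>
    simp only [List.length_cons] at hl
    obtain ⟨t, ht, hpre, c, d, hc, hd, hcd⟩ := ih (by omega)
    refine ⟨t+1, by simp; omega, ?_, c, d, by simpa using hc, by simpa using hd, hcd⟩
    intro i hi
    cases i with
    | zero => simp
    | succ j => simpa using hpre j (by omega)

theorem lex_of_mismatch : ∀ {x y : List α} (t : ℕ),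
    (∀ i, i < t → x[i]? = y[i]?) → ∀ {a b : α}, x[t]? = some a → y[t]? = some b → a < b →
    List.Lex (· < ·) x y := by
  intro x y t
  induction t generalizing x y with
  | zero =>
    intro _ a b hx hy hab
    cases x with
    | nil => simp at hx
    | cons a' l =>
      cases y with
      | nil => simp at hy
      | cons b' l' =>
        simp at hx hy
        subst hx; subst hy
        exact List.Lex.rel hab
  | succ t ih =>
    intro hpre a b hx hy hab
    cases x with
    | nil => simp at hx
    | cons a' l =>
      cases y with
      | nil => simp at hy
      | cons b' l' =>
        have h0 := hpre 0 (by omega)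
        simp at h0
        subst h0
        exact List.Lex.cons (ih (fun i hi => by simpa using hpre (i+1) (by omega))
          (by simpa using hx) (by simpa using hy) hab)


theorem lyndon_ne_nil [LinearOrder α] {l : List α} (h : IsLyndon l) : l ≠ [] := h.1

theorem lyndon_lex_drop [LinearOrder α] {l : List α} (h : IsLyndon l) (d : ℕ)
    (hd : 0 < d) (hdl : d < l.length) : List.Lex (· < ·) l (l.drop d) := by
  apply h.2 (l.drop d) (List.drop_suffix d l)
  · intro he
    have := congrArg List.length he
    simp [List.length_drop] at this
    omega
  · intro he
    have := congrArg List.length he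
    simp [List.length_drop] at this
    omega

theorem lyndon_not_periodic [LinearOrder α] {l : List α} (h : IsLyndon l) (d : ℕ)
    (hd : 0 < d) (hdl : d < l.length)
    (hper : ∀ j, j + d < l.length → l[j]? = l[j + d]?) : False := by
  have heq : l.drop d = l.take (l.length - d) := by
    apply List.ext_getElem?
    intro i
    by_cases hi : i < l.length - d
    · rw [List.getElem?_drop, List.getElem?_take, if_pos hi, Nat.add_comm d i,
        ← hper i (by omega)]
    · rw [List.getElem?_eq_none, List.getElem?_eq_none]
      · simp; omega
      · simp; omega
  have h1 := lyndon_lex_drop h d hd hdl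
  have h2 : List.Lex (· < ·) (l.drop d) l := by
    rw [heq]
    apply lex_of_prefix (List.take_prefix _ _)
    intro he
    have := congrArg List.length he
    simp at this
    omega
  exact lex_asymm h1 h2

theorem lyndon_mismatch [LinearOrder α] {l : List α} (h : IsLyndon l) (k : ℕ)
    (hk : 0 < k) (hkl : k < l.length) :
    ∃ t, t + k < l.length ∧ (∀ i, i < t → l[i]? = l[k + i]?) ∧
      ∃ a b, l[t]? = some a ∧ l[k + t]? = some b ∧ a < b := by
  obtain ⟨t, ht, hpre, a, b, ha, hb, hab⟩ :=
    lex_mismatch (lyndon_lex_drop h k hk hkl) (by simp)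
  rw [List.length_drop] at ht
  refine ⟨t, by omega, ?_, a, b, ha, ?_, hab⟩
  · intro i hi
    have := hpre i hi
    rwa [List.getElem?_drop] at this
  · rwa [List.getElem?_drop] at hb

/-- Core synchronization: a Lyndon word occurring in the frame of `λ^∞` at phase `φ`
either starts at phase 0 and fits, or stays within one copy of `λ`. -/
theorem lyndon_sync [LinearOrder α] {lu lv : List α} (hu : IsLyndon lu) (hv : IsLyndon lv)
    (φ : ℕ) (hφ : φ < lu.length)
    (hocc : ∀ i, i < lv.length → lv[i]? = lu[(φ + i) % lu.length]?) :
    φ + lv.length ≤ lu.length := by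
  set p := lu.length with hp
  set q := lv.length with hq
  by_contra hcon
  push_neg at hcon
  have hp1 : 0 < p := by omega
  have hq1 : 0 < q := by
    rcases Nat.eq_zero_or_pos q with h | h
    · omega
    · exact h
  set ℓ := p - φ with hℓ
  have hℓ1 : 0 < ℓ := by omega
  have hℓq : ℓ < q := by omega
  have hν : ∀ i, i < q - ℓ → (lv.drop ℓ)[i]? = lu[i % p]? := by
    intro i hi
    rw [List.getElem?_drop, hocc (ℓ + i) (by omega)]
    congr 1
    have : φ + (ℓ + i) = p + i := by omega
    rw [this, Nat.add_mod_left]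
  have hlexv : List.Lex (· < ·) lv (lv.drop ℓ) := lyndon_lex_drop hv ℓ hℓ1 hℓq
  rcases Nat.eq_zero_or_pos φ with hφ0 | hφpos
  · -- φ = 0 : ν is a proper prefix of lv
    have hnu : List.Lex (· < ·) (lv.drop ℓ) lv := by
      apply lex_of_prefix
      · have heq : lv.drop ℓ = lv.take (q - ℓ) := by
          apply List.ext_getElem?
          intro i
          by_cases hi : i < q - ℓ
          · rw [hν i hi, List.getElem?_take, if_pos hi, hocc i (by omega), hφ0]
            simp
          · rw [List.getElem?_eq_none, List.getElem?_eq_none] <;> simp <;> omega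
        rw [heq]
        exact List.take_prefix _ _
      · intro he
        have := congrArg List.length he
        simp at this
        omega
    exact lex_asymm hlexv hnu
  · -- φ > 0 : use the mismatch of lu with its suffix at φ
    obtain ⟨t, htp, hpre, a, b, ha, hb, hab⟩ := lyndon_mismatch hu φ hφpos hφ
    have htℓ : t < ℓ := by omega
    have hlv_early : ∀ i, i < ℓ → lv[i]? = lu[φ + i]? := by
      intro i hi
      rw [hocc i (by omega)]
      congr 1
      exact Nat.mod_eq_of_lt (by omega)
    have hnu : List.Lex (· < ·) (lv.drop ℓ) lv := by
      by_cases hcase : q - ℓ ≤ t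
      · -- ν is a proper prefix of lv
        apply lex_of_prefix
        · have : lv.drop ℓ = lv.take (q - ℓ) := by
            apply List.ext_getElem?
            intro i
            by_cases hi : i < q - ℓ
            · rw [hν i hi, List.getElem?_take, if_pos hi, hlv_early i (by omega),
                Nat.mod_eq_of_lt (by omega), hpre i (by omega)]
            · rw [List.getElem?_eq_none, List.getElem?_eq_none] <;> simp <;> omega
          rw [this]
          exact List.take_prefix _ _
        · intro he
          have := congrArg List.length he
          simp at this
          omega
      · push_neg at hcase
        apply lex_of_mismatch t _ (a := a) (b := b) _ _ hab
        · intro i hi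
          rw [hν i (by omega), Nat.mod_eq_of_lt (by omega), hpre i hi,
            hlv_early i (by omega)]
        · rw [hν t hcase, Nat.mod_eq_of_lt (by omega)]
          exact ha
        · rw [hlv_early t (by omega)]
          exact hb
    exact lex_asymm hlexv hnu

end Lex

theorem period_sub {w : List α} {a b : ℕ} (ha : IsPeriodOf w a) (hb : IsPeriodOf w b)
    (hab : a < b) (hsum : a + b ≤ w.length) : IsPeriodOf w (b - a) := by
  obtain ⟨ha1, haw, hap⟩ := ha
  obtain ⟨hb1, hbw, hbp⟩ := hb
  refine ⟨by omega, by omega, ?_⟩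
  intro i hi
  by_cases hcase : i + b < w.length
  · have h1 := hbp i hcase
    have h2 := hap (i + (b - a)) (by omega)
    rw [show i + (b - a) + a = i + b by omega] at h2
    rw [h1, h2]
  · have hia : a ≤ i := by omega
    have h1 := hap (i - a) (by omega)
    have h2 := hbp (i - a) (by omega)
    rw [show i - a + a = i by omega] at h1
    rw [show i - a + b = i + (b - a) by omega] at h2
    rw [← h1, h2]

theorem period_gcd {w : List α} : ∀ (N a b : ℕ), a + b ≤ N → IsPeriodOf w a → IsPeriodOf w b →
    a + b ≤ w.length → IsPeriodOf w (Nat.gcd a b) := by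
  intro N
  induction N with
  | zero =>
    intro a b hN ha _ _
    have := ha.1
    omega
  | succ N ih =>
    intro a b hN ha hb hsum
    have ha1 := ha.1
    have hb1 := hb.1
    rcases lt_trichotomy a b with h | h | h
    · have hsub := period_sub ha hb h hsum
      have : Nat.gcd a (b - a) = Nat.gcd a b := Nat.gcd_sub_self_right (by omega)
      rw [← this]
      exact ih a (b - a) (by omega) ha hsub (by omega)
    · subst h
      rw [Nat.gcd_self]
      exact ha
    · have hsub := period_sub hb ha h (by omega)
      have : Nat.gcd (a - b) b = Nat.gcd a b := by
        rw [Nat.gcd_comm, Nat.gcd_sub_self_right (by omega), Nat.gcd_comm]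
      rw [← this]
      exact ih (a - b) b (by omega) hsub hb (by omega)

theorem least_period_dvd_half {v : List α} (hv : v ≠ []) {q : ℕ}
    (h : IsLeastPeriod (v ++ v) q) : q ∣ v.length := by
  have hvl : 0 < v.length := List.length_pos_iff.mpr hv
  have hlen : (v ++ v).length = 2 * v.length := by simp [two_mul]
  have hmper : IsPeriodOf (v ++ v) v.length := by
    refine ⟨hvl, by omega, ?_⟩
    intro i hi
    have hiv : i < v.length := by omega
    rw [List.getElem?_append, if_pos (by omega), List.getElem?_append, if_neg (by omega)]
    congr 1
    omega
  have hqm : q ≤ v.length := h.2 _ hmper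
  have hgcd := period_gcd (w := v ++ v) (q + v.length) q v.length le_rfl h.1 hmper (by omega)
  have h1 : q ≤ Nat.gcd q v.length := h.2 _ hgcd
  have h2 : Nat.gcd q v.length ≤ q := Nat.gcd_le_left _ h.1.1
  have : Nat.gcd q v.length = q := by omega
  rw [← this]
  exact Nat.gcd_dvd_right _ _

theorem listPow_succ' (x : List α) (k : ℕ) : listPow x (k+1) = listPow x k ++ x := by
  rw [listPow, List.replicate_succ', List.flatten_append]
  simp [listPow]

theorem frame_of_decomp {l x y : List α} {k : ℕ} (w : List α) (hx : x <:+ l) (hy : y <+: l)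
    (hw : w = x ++ listPow l k ++ y) :
    ∀ i, i < w.length → w[i]? = l[(i + (l.length - x.length)) % l.length]? := by
  intro i hi
  obtain ⟨x', hx'⟩ := hx
  obtain ⟨y', hy'⟩ := hy
  have hxl : x'.length + x.length = l.length := by
    have := congrArg List.length hx'
    simpa using this
  have hyl : y.length + y'.length = l.length := by
    have := congrArg List.length hy'
    simpa using this
  have hwlen : w.length = x.length + k * l.length + y.length := by
    rw [hw]
    simp [listPow_length]
    omega
  have hW : x' ++ (w ++ y') = listPow l (k + 2) := by
    have hassoc : x' ++ ((x ++ listPow l k ++ y) ++ y')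
        = (x' ++ x) ++ (listPow l k ++ (y ++ y')) := by
      simp [List.append_assoc]
    rw [hw, hassoc, hx', hy', show k + 2 = (k+1) + 1 from rfl, listPow_succ', listPow_succ]
    simp [List.append_assoc]
  have h1 : (x' ++ (w ++ y'))[x'.length + i]? = w[i]? := by
    rw [List.getElem?_append, if_neg (by omega), show x'.length + i - x'.length = i by omega,
      List.getElem?_append, if_pos hi]
  have hbound : x'.length + i < (k + 2) * l.length := by
    have : (k + 2) * l.length = k * l.length + 2 * l.length := by ring
    omega
  rw [← h1, hW, listPow_getElem? _ _ _ hbound]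
  congr 1
  conv_lhs => rw [show x'.length + i = i + (l.length - x.length) + 0 * l.length by omega]
  rw [Nat.zero_mul, Nat.add_zero]

end TwoSqAux


open TwoSqAux in
/-- Let `u²` and `v²` be squares such that `v²` is a proper substring of `u²`
(occurring at offset `|A|`, via `u² = A · v² · B`) which starts strictly before the
occurrence of the L-root interval `r_{u²} = λᵤ^kᵤ` of `u²` (which starts at offset
`|xᵤ|`).  The L-root intervals are given by the decompositions `u² = xᵤ · λᵤ^kᵤ · yᵤ`
and `v² = xᵥ · λᵥ^kᵥ · yᵥ` where `λᵤ, λᵥ` are Lyndon words whose lengths are the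
smallest periods of `u²` and `v²`, `xᵤ, xᵥ` are proper suffixes and `yᵤ, yᵥ` proper
prefixes of the respective L-roots.  Then `r_{u²}` is not a substring of `v²`, and
either `r_{v²} = λᵥ^kᵥ` starts at the same position as `r_{u²}` (in `u²`) and is a
prefix of it, or the occurrence of `r_{v²}` ends strictly before `r_{u²}` starts. -/
theorem two_squares_lroots_infix {α : Type*} [LinearOrder α]
    (u v : List α) (hune : u ≠ []) (hvne : v ≠ [])
    (A B : List α) (hsub : u ++ u = A ++ (v ++ v) ++ B) (hproper : v ++ v ≠ u ++ u)
    (pu pv : ℕ) (hpu : IsLeastPeriod (u ++ u) pu) (hpv : IsLeastPeriod (v ++ v) pv)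
    (lu lv xu yu xv yv : List α) (ku kv : ℕ)
    (hluL : IsLyndon lu) (hlul : lu.length = pu)
    (hlvL : IsLyndon lv) (hlvl : lv.length = pv)
    (hxu : xu <:+ lu) (hxune : xu ≠ lu) (hyu : yu <+: lu) (hyune : yu ≠ lu)
    (hxv : xv <:+ lv) (hxvne : xv ≠ lv) (hyv : yv <+: lv) (hyvne : yv ≠ lv)
    (hdu : u ++ u = xu ++ listPow lu ku ++ yu)
    (hdv : v ++ v = xv ++ listPow lv kv ++ yv)
    (hstart : A.length < xu.length) :
    ¬ (listPow lu ku <:+: v ++ v) ∧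
      ((A.length + xv.length = xu.length ∧ listPow lv kv <+: listPow lu ku) ∨
        A.length + xv.length + (listPow lv kv).length ≤ xu.length) := by

  classical
  subst hlul hlvl
  have hqdvd : lv.length ∣ v.length := least_period_dvd_half hvne hpv
  have hpdvd : lu.length ∣ u.length := least_period_dvd_half hune hpu
  obtain ⟨⟨hpu1, hpuN, hpuP⟩, hpumin⟩ := hpu
  obtain ⟨⟨hpv1, hpvN, hpvP⟩, hpvmin⟩ := hpv
  have hNu : (u ++ u).length = 2 * u.length := by simp [two_mul]
  have hNv : (v ++ v).length = 2 * v.length := by simp [two_mul]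
  have hun : 0 < u.length := List.length_pos_iff.mpr hune
  have hvn : 0 < v.length := List.length_pos_iff.mpr hvne
  have hlen_u : 2 * u.length = xu.length + ku * lu.length + yu.length := by
    have h := congrArg List.length hdu
    rw [hNu] at h
    simp [List.length_append, listPow_length] at h
    omega
  have hlen_v : 2 * v.length = xv.length + kv * lv.length + yv.length := by
    have h := congrArg List.length hdv
    rw [hNv] at h
    simp [List.length_append, listPow_length] at h
    omega
  have hs : xu.length < lu.length :=
    lt_of_le_of_ne (hxu.length_le) (fun h => hxune (hxu.eq_of_length h))
  have hyul : yu.length < lu.length :=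
    lt_of_le_of_ne (hyu.length_le) (fun h => hyune (hyu.eq_of_length h))
  have hxvl : xv.length < lv.length :=
    lt_of_le_of_ne (hxv.length_le) (fun h => hxvne (hxv.eq_of_length h))
  have hyvl : yv.length < lv.length :=
    lt_of_le_of_ne (hyv.length_le) (fun h => hyvne (hyv.eq_of_length h))
  have hnperP : ∀ i : ℕ, i + u.length < (u ++ u).length →
      (u ++ u)[i]? = (u ++ u)[i + u.length]? := by
    intro i hi
    rw [hNu] at hi
    rw [List.getElem?_append, if_pos (by omega), List.getElem?_append, if_neg (by omega)]
    congr 1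
    omega
  have hmperP : ∀ i : ℕ, i + v.length < (v ++ v).length →
      (v ++ v)[i]? = (v ++ v)[i + v.length]? := by
    intro i hi
    rw [hNv] at hi
    rw [List.getElem?_append, if_pos (by omega), List.getElem?_append, if_neg (by omega)]
    congr 1
    omega
  have hpn : lu.length ≤ u.length := hpumin _ ⟨hun, by omega, hnperP⟩
  have hqm : lv.length ≤ v.length := hpvmin _ ⟨hvn, by omega, hmperP⟩
  have hku1 : 1 ≤ ku := by
    rcases Nat.eq_zero_or_pos ku with h | h
    · subst h; simp at hlen_u; omega
    · exact h
  have hkv1 : 1 ≤ kv := by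
    rcases Nat.eq_zero_or_pos kv with h | h
    · subst h; simp at hlen_v; omega
    · exact h
  have hqkv : lv.length ≤ kv * lv.length := Nat.le_mul_of_pos_left _ (by omega)
  have hpku : lu.length ≤ ku * lu.length := Nat.le_mul_of_pos_left _ (by omega)
  have hsy : xu.length + yu.length = lu.length := by
    have h1 : lu.length ∣ 2 * u.length := Dvd.dvd.mul_left hpdvd 2
    have h2 : lu.length ∣ ku * lu.length := Dvd.intro_left ku rfl
    have hdvd2 : lu.length ∣ xu.length + yu.length := by
      rw [show xu.length + yu.length = 2 * u.length - ku * lu.length by omega]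
      exact Nat.dvd_sub h1 h2
    obtain ⟨c, hc⟩ := hdvd2
    rcases c with _ | _ | c
    · rw [Nat.mul_zero] at hc; omega
    · rw [Nat.mul_one] at hc; omega
    · exfalso
      rw [show c + 1 + 1 = c + 2 from rfl] at hc
      have : lu.length * 2 ≤ lu.length * (c + 2) := Nat.mul_le_mul_left _ (by omega)
      omega
  have hABlen : 2 * u.length = A.length + 2 * v.length + B.length := by
    have h := congrArg List.length hsub
    rw [hNu] at h
    simp [List.length_append] at h
    omega
  have hmn : 2 * v.length < 2 * u.length := by
    rcases Nat.eq_zero_or_pos (A.length + B.length) with h | h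
    · have hA : A = [] := List.length_eq_zero_iff.mp (by omega)
      have hB : B = [] := List.length_eq_zero_iff.mp (by omega)
      rw [hA, hB] at hsub
      simp at hsub
      exact absurd hsub.symm hproper
    · omega
  have hA2m : A.length + 2 * v.length ≤ (u ++ u).length := by omega
  have hframeU := frame_of_decomp (u ++ u) hxu hyu hdu
  have hframeV := frame_of_decomp (v ++ v) hxv hyv hdv
  have hVat : ∀ i, i < 2 * v.length → (u ++ u)[A.length + i]? = (v ++ v)[i]? := by
    intro i hi
    conv_lhs => rw [hsub]
    rw [List.append_assoc, List.getElem?_append, if_neg (by omega),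
      show A.length + i - A.length = i by omega,
      List.getElem?_append, if_pos (by rw [hNv]; omega)]
  have hU : ∀ j, xu.length + j < (u ++ u).length →
      (u ++ u)[xu.length + j]? = lu[j % lu.length]? := by
    intro j hj
    rw [hframeU _ hj]
    congr 1
    rw [show xu.length + j + (lu.length - xu.length) = j + lu.length by omega,
      Nat.add_mod_right]
  have hrunV : ∀ j, j < kv * lv.length →
      (u ++ u)[A.length + xv.length + j]? = lv[j % lv.length]? := by
    intro j hj
    rw [show A.length + xv.length + j = A.length + (xv.length + j) by omega,
      hVat _ (by omega), hframeV _ (by rw [hNv]; omega)]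
    congr 1
    rw [show xv.length + j + (lv.length - xv.length) = j + lv.length by omega,
      Nat.add_mod_right]
  have hsyncC : ∀ c, (∀ i, i < lv.length → (u ++ u)[c + i]? = lv[i]?) →
      c + lv.length ≤ (u ++ u).length →
      (c + (lu.length - xu.length)) % lu.length + lv.length ≤ lu.length ∧
      ∀ i, i < lv.length → lv[i]? = lu[(c + (lu.length - xu.length)) % lu.length + i]? := by
    intro c hc hcN
    have hφp : (c + (lu.length - xu.length)) % lu.length < lu.length := Nat.mod_lt _ (by omega)
    have hocc : ∀ i, i < lv.length →
        lv[i]? = lu[((c + (lu.length - xu.length)) % lu.length + i) % lu.length]? := by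
      intro i hi
      rw [← hc i hi, hframeU _ (by omega), Nat.mod_add_mod,
        show c + (lu.length - xu.length) + i = c + i + (lu.length - xu.length) by omega]
    have h1 := lyndon_sync hluL hlvL _ hφp hocc
    exact ⟨h1, fun i hi => by rw [hocc i hi, Nat.mod_eq_of_lt (by omega)]⟩
  have hoccT : ∀ t, t < kv → ∀ i, i < lv.length →
      (u ++ u)[(A.length + xv.length + t * lv.length) + i]? = lv[i]? := by
    intro t ht i hi
    have htq : t * lv.length + i < kv * lv.length := by
      have h1 : (t + 1) * lv.length ≤ kv * lv.length := Nat.mul_le_mul_right _ (by omega)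
      rw [add_mul, one_mul] at h1
      omega
    rw [show A.length + xv.length + t * lv.length + i
        = A.length + xv.length + (t * lv.length + i) by omega, hrunV _ htq]
    have : (t * lv.length + i) % lv.length = i := by
      rw [Nat.mul_comm, Nat.mul_add_mod, Nat.mod_eq_of_lt hi]
    rw [this]
  have hqp : lv.length ≤ lu.length := by
    have h0 := (hsyncC (A.length + xv.length + 0 * lv.length) (hoccT 0 (by omega))
      (by simp only [Nat.zero_mul, Nat.add_zero]; omega)).1
    omega
  constructor
  · -- Part 1 : listPow lu ku is not an infix of v ++ v
    intro hinf
    obtain ⟨s', t', hst⟩ := hinf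
    have hstlen : s'.length + ku * lu.length + t'.length = 2 * v.length := by
      have h := congrArg List.length hst
      rw [hNv] at h
      simp [List.length_append, listPow_length] at h
      omega
    have hoccW : ∀ i, i < ku * lu.length →
        (u ++ u)[A.length + s'.length + i]? = lu[i % lu.length]? := by
      intro i hi
      rw [show A.length + s'.length + i = A.length + (s'.length + i) by omega,
        hVat _ (by omega), ← hst, List.append_assoc, List.getElem?_append,
        if_neg (by omega), show s'.length + i - s'.length = i by omega,
        List.getElem?_append, if_pos (by rw [listPow_length]; omega),
        listPow_getElem? _ _ _ hi]
    have hocc1 : ∀ i, i < lu.length → (u ++ u)[A.length + s'.length + i]? = lu[i]? := by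
      intro i hi
      rw [hoccW i (by omega), Nat.mod_eq_of_lt hi]
    have hφ0 : (A.length + s'.length + (lu.length - xu.length)) % lu.length = 0 := by
      have hφp : (A.length + s'.length + (lu.length - xu.length)) % lu.length < lu.length :=
        Nat.mod_lt _ (by omega)
      have hocc : ∀ i, i < lu.length → lu[i]? =
          lu[((A.length + s'.length + (lu.length - xu.length)) % lu.length + i) % lu.length]? := by
        intro i hi
        rw [← hocc1 i hi, hframeU _ (by omega), Nat.mod_add_mod,
          show A.length + s'.length + (lu.length - xu.length) + i
            = A.length + s'.length + i + (lu.length - xu.length) by omega]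
      have := lyndon_sync hluL hluL _ hφp hocc
      omega
    obtain ⟨c, hc⟩ := Nat.dvd_of_mod_eq_zero hφ0
    have hgs : A.length + s'.length = xu.length := by
      rcases Nat.lt_or_ge c 2 with h2 | h2
      · have hc1 : 1 ≤ c := by
          rcases Nat.eq_zero_or_pos c with h | h
          · subst h; simp at hc; omega
          · exact h
        have hc2 : c = 1 := by omega
        subst hc2
        omega
      · exfalso
        have h3 : lu.length * 2 ≤ lu.length * c := Nat.mul_le_mul_left _ h2
        omega
    have hsur : xu.length + ku * lu.length ≤ A.length + 2 * v.length := by omega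
    rcases Nat.lt_or_ge lv.length lu.length with hqlt | hqge
    · -- q < p : lu would be periodic with period q
      apply lyndon_not_periodic hluL lv.length (by omega) hqlt
      intro j hj
      have e1 : (u ++ u)[xu.length + j]? = lu[j]? := by
        rw [hU j (by omega), Nat.mod_eq_of_lt (by omega)]
      have e2' : (u ++ u)[xu.length + j + lv.length]? = lu[j + lv.length]? := by
        rw [show xu.length + j + lv.length = xu.length + (j + lv.length) by omega,
          hU _ (by omega), Nat.mod_eq_of_lt (by omega)]
      have e3 : (u ++ u)[xu.length + j]? = (u ++ u)[xu.length + j + lv.length]? := by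
        have hje : xu.length + j - A.length + lv.length < (v ++ v).length := by
          rw [hNv]; omega
        have hper := hpvP (xu.length + j - A.length) hje
        have d1 := hVat (xu.length + j - A.length) (by omega)
        have d2 := hVat (xu.length + j - A.length + lv.length) (by omega)
        rw [show A.length + (xu.length + j - A.length) = xu.length + j by omega] at d1
        rw [show A.length + (xu.length + j - A.length + lv.length)
            = xu.length + j + lv.length by omega] at d2
        rw [← d1, ← d2] at hper
        exact hper
      rw [← e1, e3]
      exact e2'
    · -- q = p : divisibility contradiction
      have hqep : lv.length = lu.length := le_antisymm hqp hqge
      have hpm : lu.length ∣ v.length := by rw [← hqep]; exact hqdvd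
      obtain ⟨d1, hd1⟩ := hpdvd
      obtain ⟨d2, hd2⟩ := hpm
      have hd12 : d2 < d1 := by
        have h4 : v.length < u.length := by omega
        rw [hd1, hd2] at h4
        exact Nat.lt_of_mul_lt_mul_left h4
      have hnm : lu.length * d2 + lu.length ≤ lu.length * d1 := by
        have := Nat.mul_le_mul_left lu.length (show d2 + 1 ≤ d1 by omega)
        rw [Nat.mul_add, Nat.mul_one] at this
        omega
      omega
  · -- Part 2
    rw [listPow_length]
    by_cases hend : A.length + xv.length + kv * lv.length ≤ xu.length
    · exact Or.inr hend
    · push_neg at hend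
      left
      have hbs : A.length + xv.length = xu.length := by
        by_cases hb0 : (A.length + xv.length + (lu.length - xu.length)) % lu.length = 0
        · obtain ⟨c, hc⟩ := Nat.dvd_of_mod_eq_zero hb0
          rcases Nat.lt_or_ge c 2 with h2 | h2
          · have hc1 : 1 ≤ c := by
              rcases Nat.eq_zero_or_pos c with h | h
              · subst h; simp at hc; omega
              · exact h
            have hc2 : c = 1 := by omega
            subst hc2
            omega
          · exfalso
            have h3 : lu.length * 2 ≤ lu.length * c := Nat.mul_le_mul_left _ h2
            omega
        · exfalso
          have hPkv : xu.length < A.length + xv.length + (kv - 1) * lv.length + lv.length := by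
            have h5 : (kv - 1) * lv.length = kv * lv.length - lv.length := Nat.sub_one_mul _ _
            omega
          have hPex : ∃ t, xu.length < A.length + xv.length + t * lv.length + lv.length :=
            ⟨kv - 1, hPkv⟩
          have hPt := Nat.find_spec hPex
          set t0 := Nat.find hPex with ht0def
          have hmin : ∀ t, t < t0 →
              ¬ (xu.length < A.length + xv.length + t * lv.length + lv.length) :=
            fun t ht => Nat.find_min hPex ht
          have ht0kv : t0 < kv := by
            have h6 : t0 ≤ kv - 1 := Nat.find_min' hPex hPkv
            omega
          have hcN : A.length + xv.length + t0 * lv.length + lv.length ≤ (u ++ u).length := by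
            have h1 : (t0 + 1) * lv.length ≤ kv * lv.length := Nat.mul_le_mul_right _ (by omega)
            rw [add_mul, one_mul] at h1
            omega
          have hsc := hsyncC (A.length + xv.length + t0 * lv.length) (hoccT t0 ht0kv) hcN
          rcases lt_trichotomy (A.length + xv.length + t0 * lv.length) xu.length
            with hlt | heq | hgt
          · -- c < s
            have hmod : (A.length + xv.length + t0 * lv.length + (lu.length - xu.length))
                % lu.length
                = A.length + xv.length + t0 * lv.length + (lu.length - xu.length) :=
              Nat.mod_eq_of_lt (by omega)
            have h7 := hsc.1
            rw [hmod] at h7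
            omega
          · -- c = s
            have ht01 : 1 ≤ t0 := by
              rcases Nat.eq_zero_or_pos t0 with h | h
              · exfalso
                apply hb0
                rw [h, Nat.zero_mul, Nat.add_zero] at heq
                rw [show A.length + xv.length + (lu.length - xu.length) = lu.length by omega,
                  Nat.mod_self]
              · exact h
            have ht0q : lv.length ≤ t0 * lv.length := Nat.le_mul_of_pos_left _ (by omega)
            have hq_le_s : lv.length ≤ xu.length := by omega
            have hfac1 : ∀ i, i < lv.length → lv[i]? = lu[i]? := by
              intro i hi
              have h0 : (A.length + xv.length + t0 * lv.length + (lu.length - xu.length))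
                  % lu.length = 0 := by
                rw [show A.length + xv.length + t0 * lv.length + (lu.length - xu.length)
                    = lu.length by omega, Nat.mod_self]
              have h8 := hsc.2 i hi
              rwa [h0, Nat.zero_add] at h8
            have hc'eq : A.length + xv.length + (t0 - 1) * lv.length
                = xu.length - lv.length := by
              have h5 : (t0 - 1) * lv.length = t0 * lv.length - lv.length := Nat.sub_one_mul _ _
              omega
            have hsc' := hsyncC (A.length + xv.length + (t0 - 1) * lv.length)
              (hoccT (t0 - 1) (by omega)) (by rw [hc'eq]; omega)
            have hfac2 : ∀ i, i < lv.length → lv[i]? = lu[(lu.length - lv.length) + i]? := by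
              intro i hi
              have h8 := hsc'.2 i hi
              rw [hc'eq] at h8
              rwa [show xu.length - lv.length + (lu.length - xu.length)
                  = lu.length - lv.length by omega,
                Nat.mod_eq_of_lt (by omega)] at h8
            apply lyndon_not_periodic hluL (lu.length - lv.length) (by omega) (by omega)
            intro j hj
            have e1 := hfac1 j (by omega)
            have e2 := hfac2 j (by omega)
            rw [show j + (lu.length - lv.length) = (lu.length - lv.length) + j by omega,
              ← e1, e2]
          · -- c > s, so t0 = 0 and b > s
            have ht00 : t0 = 0 := by
              rcases Nat.eq_zero_or_pos t0 with h | h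
              · exact h
              · exfalso
                have hprev := hmin (t0 - 1) (by omega)
                push_neg at hprev
                rw [Nat.sub_one_mul] at hprev
                have ht0q : lv.length ≤ t0 * lv.length := Nat.le_mul_of_pos_left _ (by omega)
                omega
            rw [ht00, Nat.zero_mul, Nat.add_zero] at hgt hsc hcN
            have hd1 : 1 ≤ A.length + xv.length - xu.length := by omega
            have hd2 : A.length + xv.length - xu.length + 2 ≤ lv.length := by omega
            have hmodb : (A.length + xv.length + (lu.length - xu.length)) % lu.length
                = A.length + xv.length - xu.length := by
              rw [show A.length + xv.length + (lu.length - xu.length)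
                  = (A.length + xv.length - xu.length) + lu.length by omega,
                Nat.add_mod_right]
              exact Nat.mod_eq_of_lt (by omega)
            have hdq : A.length + xv.length - xu.length + lv.length ≤ lu.length := by
              have h7 := hsc.1
              rwa [hmodb] at h7
            have hfacA : ∀ i, i < lv.length →
                lv[i]? = lu[(A.length + xv.length - xu.length) + i]? := by
              intro i hi
              have h8 := hsc.2 i hi
              rwa [hmodb] at h8
            obtain ⟨xv', hxv'⟩ := hxv
            have hxvlen : xv'.length + xv.length = lv.length := by
              have := congrArg List.length hxv'
              simpa using this
            have hfacB : ∀ j, j < A.length + xv.length - xu.length →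
                lu[j]? = lv[(lv.length - (A.length + xv.length - xu.length)) + j]? := by
              intro j hj
              have e1 : (u ++ u)[xu.length + j]? = lu[j]? := by
                rw [hU j (by omega), Nat.mod_eq_of_lt (by omega)]
              have e2 : (u ++ u)[xu.length + j]? = xv[xu.length + j - A.length]? := by
                conv_lhs => rw [show xu.length + j = A.length + (xu.length + j - A.length) by omega]
                rw [hVat _ (by omega), hdv, List.append_assoc, List.getElem?_append,
                  if_pos (by omega)]
              have e3 : xv[xu.length + j - A.length]?
                  = lv[(lv.length - (A.length + xv.length - xu.length)) + j]? := by
                have h9 : xv[xu.length + j - A.length]?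
                    = (xv' ++ xv)[xv'.length + (xu.length + j - A.length)]? := by
                  rw [List.getElem?_append, if_neg (by omega)]
                  congr 1
                  omega
                rw [h9, hxv']
                congr 1
                omega
              rw [← e1, e2, e3]
            obtain ⟨t, htq, hpre, a, b, ha, hb, hab⟩ := lyndon_mismatch hlvL
              (lv.length - (A.length + xv.length - xu.length)) (by omega) (by omega)
            have htd : t < A.length + xv.length - xu.length := by omega
            have hlex1 : List.Lex (· < ·) (lu.drop (A.length + xv.length - xu.length)) lu := by
              apply lex_of_mismatch t _ (a := a) (b := b) _ _ hab
              · intro i hi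
                rw [List.getElem?_drop, ← hfacA i (by omega), hpre i hi, ← hfacB i (by omega)]
              · rw [List.getElem?_drop, ← hfacA t (by omega)]
                exact ha
              · rw [hfacB t htd]
                exact hb
            exact lex_asymm (lyndon_lex_drop hluL _ (by omega) (by omega)) hlex1
      have hkvle : kv * lv.length ≤ ku * lu.length := by
        by_contra hgt
        push_neg at hgt
        rcases Nat.lt_or_ge lv.length lu.length with hqlt | hqge
        · apply lyndon_not_periodic hluL lv.length (by omega) hqlt
          intro j hj
          have e1 : (u ++ u)[xu.length + j]? = lu[j]? := by
            rw [hU j (by omega), Nat.mod_eq_of_lt (by omega)]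
          have e2 : (u ++ u)[xu.length + (j + lv.length)]? = lu[j + lv.length]? := by
            rw [hU _ (by omega), Nat.mod_eq_of_lt (by omega)]
          have e3 : (u ++ u)[xu.length + j]? = lv[j % lv.length]? := by
            have h8 := hrunV j (by omega)
            rwa [hbs] at h8
          have e4 : (u ++ u)[xu.length + (j + lv.length)]? = lv[(j + lv.length) % lv.length]? := by
            have h8 := hrunV (j + lv.length) (by omega)
            rw [hbs] at h8
            rwa [show xu.length + (j + lv.length) = xu.length + j + lv.length by omega] at h8 ⊢
          rw [← e1, ← e2, e3, e4, Nat.add_mod_right]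
        · have hqep : lv.length = lu.length := le_antisymm hqp hqge
          have h7 : ku * lv.length = ku * lu.length := by rw [hqep]
          have hk : ku + 1 ≤ kv := by
            by_contra hkc
            push_neg at hkc
            have h8 : kv * lv.length ≤ ku * lv.length := Nat.mul_le_mul_right _ (by omega)
            omega
          have h6 := Nat.mul_le_mul_right lv.length hk
          rw [add_mul, one_mul] at h6
          omega
      refine ⟨hbs, ?_⟩
      have heqtake : listPow lv kv = (listPow lu ku).take (kv * lv.length) := by
        apply List.ext_getElem?
        intro i
        by_cases hi : i < kv * lv.length
        · rw [listPow_getElem? _ _ _ hi,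
            List.getElem?_take, if_pos hi, listPow_getElem? _ _ _ (by omega)]
          have e1 := hrunV i hi
          rw [hbs] at e1
          have e2 := hU i (by omega)
          rw [← e1, ← e2]
        · push_neg at hi
          rw [List.getElem?_eq_none (by rw [listPow_length]; omega),
            List.getElem?_eq_none (by rw [List.length_take, listPow_length]; omega)]
      rw [heqtake]
      exact List.take_prefix _ _
end

section
/- Let S : ℕ → ℝ be any function satisfying S(1) = 0 and, for every n ≥ 2, S(n) ≤ max{ S(n₁) + S(n₂) + min(n₁, n₂) : n₁, n₂ ≥ 1 and n₁ + n₂ = n }. Then S(n) ≤ (n/2)·log₂ n for all n ≥ 1. -/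
/-!
Write `H` for the binary entropy in bits. For `n = n₁ + n₂` one has
`n log₂ n - n₁ log₂ n₁ - n₂ log₂ n₂ = n · H(n₁ / n)`, and concavity of `H` between `H 0 = 0` and
`H (1/2) = 1` gives `H p ≥ 2 min p (1 - p)`. Hence the bound `(n/2) log₂ n` absorbs the cost
`min n₁ n₂` of every split, and strong induction on `n` finishes the proof.
-/

open Real

lemma two_mul_min_mul_log_two_le_binEntropy {p : ℝ} (hp₀ : 0 ≤ p) (hp₁ : p ≤ 1) :
    2 * min p (1 - p) * log 2 ≤ binEntropy p := by
  wlog hp : p ≤ 2⁻¹ generalizing p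
  · simpa [min_comm] using this (p := 1 - p) (by linarith) (by linarith) (by linarith)
  have := strictConcave_binEntropy.concaveOn.2 (x := 0) (y := 2⁻¹) (by simp) (by norm_num)
    (by linarith : 0 ≤ 1 - 2 * p) (by linarith : 0 ≤ 2 * p) (by ring)
  rw [min_eq_left (by linarith)]
  simpa [smul_eq_mul, mul_comm, mul_assoc] using this

lemma mul_binEntropy_div_add {a b : ℝ} (hab : a + b ≠ 0) :
    (a + b) * binEntropy (a / (a + b)) = (a + b) * log (a + b) - a * log a - b * log b := by
  have hb : 1 - a / (a + b) = b / (a + b) := by field_simp; ring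
  have scale (x : ℝ) :
      (a + b) * negMulLog (x / (a + b)) = negMulLog x - x / (a + b) * negMulLog (a + b) := by
    have := negMulLog_mul (x / (a + b)) (a + b)
    rw [div_mul_cancel₀ _ hab] at this
    linarith
  rw [binEntropy_eq_negMulLog_add_negMulLog_one_sub, hb, mul_add, scale, scale]
  simp only [negMulLog]
  field_simp
  ring

lemma mul_log_add_mul_log_add_two_mul_min_mul_log_two_le {a b : ℝ} (ha : 0 ≤ a) (hb : 0 ≤ b) :
    a * log a + b * log b + 2 * min a b * log 2 ≤ (a + b) * log (a + b) := by
  rcases (add_nonneg ha hb).eq_or_lt with hab | hab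
  · obtain ⟨rfl, rfl⟩ : a = 0 ∧ b = 0 := ⟨by linarith, by linarith⟩
    simp
  have hp : 1 - a / (a + b) = b / (a + b) := by field_simp; ring
  have := mul_le_mul_of_nonneg_left
    (two_mul_min_mul_log_two_le_binEntropy (p := a / (a + b)) (by positivity)
      ((div_le_one hab).2 (by linarith))) hab.le
  rw [mul_binEntropy_div_add hab.ne', hp, min_div_div_right hab.le] at this
  field_simp at this
  linarith

lemma mul_logb_add_mul_logb_add_two_mul_min_le {a b : ℝ} (ha : 0 ≤ a) (hb : 0 ≤ b) :
    a * logb 2 a + b * logb 2 b + 2 * min a b ≤ (a + b) * logb 2 (a + b) := by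
  have h2 : 0 < log 2 := log_pos one_lt_two
  simp only [logb, mul_div_assoc']
  rw [← add_div, div_add' _ _ _ h2.ne', div_le_div_iff_of_pos_right h2]
  exact mul_log_add_mul_log_add_two_mul_min_mul_log_two_le ha hb

/-- If `S : ℕ → ℝ` satisfies `S 1 = 0` and, for every `n ≥ 2`,
`S n ≤ max { S n₁ + S n₂ + min n₁ n₂ : n₁, n₂ ≥ 1, n₁ + n₂ = n }`
(the maximum being attained by some pair), then `S n ≤ (n/2) · log₂ n` for all `n ≥ 1`. -/
theorem S_le_half_n_log_n (S : ℕ → ℝ) (h1 : S 1 = 0)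
    (hrec : ∀ n : ℕ, 2 ≤ n → ∃ n₁ n₂ : ℕ, 1 ≤ n₁ ∧ 1 ≤ n₂ ∧ n₁ + n₂ = n ∧
      S n ≤ S n₁ + S n₂ + (min n₁ n₂ : ℝ)) :
    ∀ n : ℕ, 1 ≤ n → S n ≤ ((n : ℝ) / 2) * Real.logb 2 n := by
  intro n
  induction n using Nat.strong_induction_on with
  | _ n ih =>
    intro hn
    rcases hn.eq_or_lt with rfl | hn
    · simp [h1]
    obtain ⟨n₁, n₂, hn₁, hn₂, rfl, hS⟩ := hrec n hn
    have ih₁ := ih n₁ (by omega) hn₁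
    have ih₂ := ih n₂ (by omega) hn₂
    have split := mul_logb_add_mul_logb_add_two_mul_min_le (Nat.cast_nonneg n₁ : (0 : ℝ) ≤ n₁)
      (Nat.cast_nonneg n₂)
    push_cast
    linarith
end

section
/- Let v be a string whose smallest period p satisfies 2p ≤ |v| (a repetition). Then there exists exactly one string λ of length p that is a Lyndon word and occurs as a substring of v (the L-root of v). -/
/-!
The length-`p` windows of a `p`-periodic word `v` are exactly the rotations of its prefix
`u = v.take p`, and when `2p ≤ |v|` every rotation of `u` occurs. Minimality of `p` makes `u`
primitive (a nontrivial rotation fixing `u` would be a smaller period of `v`), so the least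
rotation of `u` is strictly below all its other rotations. Being strictly below all nontrivial
rotations characterises Lyndon words, and two rotations of one word that are both Lyndon coincide.
-/

namespace List

section LT

variable {α : Type*} [LT α]

theorem lt_or_isPrefix_of_lt_append :
    ∀ {a b : List α} (c : List α), a < b ++ c → a < b ∨ b <+: a
  | _, [], _, _ => Or.inr nil_prefix
  | [], _ :: _, _, _ => Or.inl Lex.nil
  | _ :: _, _ :: _, c, .rel h => Or.inl (.rel h)
  | _ :: a, _ :: b, c, .cons h =>
    (lt_or_isPrefix_of_lt_append c h).imp Lex.cons fun ⟨z, hz⟩ =>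
      ⟨z, by rw [cons_append, hz]⟩

theorem append_lt_append_right_of_length_eq :
    ∀ {a b : List α} (c : List α), a < b → a.length = b.length → a ++ c < b ++ c
  | _ :: _, _ :: _, _, .rel h, _ => .rel h
  | _ :: _, _ :: _, c, .cons h, hl =>
    .cons (append_lt_append_right_of_length_eq c h (by simpa using hl))
  | [], _ :: _, _, _, hl | _ :: _, [], _, _, hl => by simp at hl

end LT

variable {α : Type*} [LinearOrder α]

theorem lt_of_append_lt_append_left {s a b : List α} (h : s ++ a < s ++ b) : a < b := by
  rcases lt_trichotomy a b with hab | rfl | hba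
  · exact hab
  · exact absurd h (lt_irrefl _)
  · exact absurd h (append_left_lt hba).asymm

end List

open List

section Lyndon

variable {α : Type*} [LinearOrder α]

theorem isLyndon_iff_forall_lt_rotate {w : List α} :
    IsLyndon w ↔ w ≠ [] ∧ ∀ k, 0 < k → k < w.length → w < w.rotate k := by
  constructor
  · rintro ⟨hne, hsuf⟩
    refine ⟨hne, fun k hk0 hk => ?_⟩
    have hdrop : w < w.drop k :=
      hsuf _ (drop_suffix k w) (by simp; omega) fun h => by
        have := congrArg length h
        simp at this
        omega
    rw [rotate_eq_drop_append_take hk.le]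
    exact Lex.append_right _ (w.take k) hdrop
  · rintro ⟨hne, hrot⟩
    refine ⟨hne, ?_⟩
    rintro s ⟨t, rfl⟩ hs hst
    have ht : t ≠ [] := by rintro rfl; exact hst rfl
    have hlt : t ++ s < s ++ t := by
      simpa only [rotate_append_length_eq] using
        hrot t.length (length_pos_iff.2 ht) (by simp [length_pos_iff.2 hs])
    rcases lt_or_isPrefix_of_lt_append t hlt with h | ⟨r, hr⟩
    · exact h
    · -- `t ++ s = s ++ r` with `r < t`, so its rotation `r ++ s` would lie below it
      have hlen : r.length = t.length := by
        have := congrArg length hr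
        simp at this
        omega
      rw [← hr] at hlt
      have hr_lt : r ++ s < t ++ s :=
        append_lt_append_right_of_length_eq s (lt_of_append_lt_append_left hlt) hlen
      have hs_lt := hrot s.length (length_pos_iff.2 hs) (by simp [length_pos_iff.2 ht])
      rw [← hr] at hr_lt
      rw [← hr, rotate_append_length_eq] at hs_lt
      exact absurd hr_lt hs_lt.asymm

theorem IsLyndon.lt_of_isRotated {a b : List α} (ha : IsLyndon a) (hab : a ~r b) (hne : a ≠ b) :
    a < b := by
  obtain ⟨n, hn, rfl⟩ := isRotated_iff_mod.1 hab
  rcases Nat.eq_zero_or_pos n with rfl | hn0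
  · exact (hne (rotate_zero a).symm).elim
  rcases hn.lt_or_eq with hn | rfl
  · exact (isLyndon_iff_forall_lt_rotate.1 ha).2 n hn0 hn
  · exact (hne (rotate_length a).symm).elim

theorem IsLyndon.eq_of_isRotated {a b : List α} (ha : IsLyndon a) (hb : IsLyndon b)
    (hab : a ~r b) : a = b := by
  by_contra hne
  exact (ha.lt_of_isRotated hab hne).asymm (hb.lt_of_isRotated hab.symm (Ne.symm hne))

theorem exists_isLyndon_rotate {u : List α} (hu : u ≠ [])
    (hprim : ∀ k, 0 < k → k < u.length → u.rotate k ≠ u) :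
    ∃ m < u.length, IsLyndon (u.rotate m) := by
  obtain ⟨m, hm, hmin⟩ := (Finset.range u.length).exists_min_image u.rotate
    (Finset.nonempty_range_iff.2 (length_pos_iff.2 hu).ne')
  rw [Finset.mem_range] at hm
  refine ⟨m, hm, isLyndon_iff_forall_lt_rotate.2 ⟨by simpa using hu, fun k hk0 hk => ?_⟩⟩
  rw [length_rotate] at hk
  have hrot : (u.rotate m).rotate k = (u.rotate k).rotate m := by
    rw [rotate_rotate, rotate_rotate, Nat.add_comm]
  refine lt_of_le_of_ne ?_ fun h => hprim k hk0 hk (rotate_eq_rotate.1 (hrot ▸ h).symm)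
  have hle := hmin ((m + k) % u.length) (Finset.mem_range.2 (Nat.mod_lt _ (length_pos_iff.2 hu)))
  rwa [rotate_mod, ← rotate_rotate] at hle

end Lyndon

namespace IsPeriodOf

variable {α : Type*} {v : List α} {p : ℕ}

theorem getElem?_mod (h : IsPeriodOf v p) {k : ℕ} (hk : k < v.length) : v[k]? = v[k % p]? := by
  induction k using Nat.strong_induction_on with
  | _ k ih =>
    rcases lt_or_ge k p with hkp | hpk
    · rw [Nat.mod_eq_of_lt hkp]
    · have hstep := h.2.2 (k - p) (by omega)
      rw [Nat.sub_add_cancel hpk] at hstep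
      rw [← hstep, ih (k - p) (Nat.sub_lt_of_pos_le h.1 hpk) (by omega),
        Nat.mod_eq_sub_mod hpk]

theorem take_length (h : IsPeriodOf v p) : (v.take p).length = p :=
  length_take_of_le h.2.1

theorem take_drop_eq_rotate (h : IsPeriodOf v p) {i : ℕ} (hi : i + p ≤ v.length) :
    (v.drop i).take p = (v.take p).rotate i := by
  refine ext_getElem? fun j => ?_
  have hu := h.take_length
  rcases lt_or_ge j p with hj | hj
  · rw [getElem?_rotate (by omega), hu,
      getElem?_take_of_lt (Nat.mod_lt _ h.1), getElem?_take_of_lt hj, getElem?_drop,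
      h.getElem?_mod (by omega), Nat.add_comm]
  · rw [getElem?_eq_none (by simp; omega), getElem?_eq_none (by simp [hu]; omega)]

theorem rotate_take_infix (h : IsPeriodOf v p) {i : ℕ} (hi : i + p ≤ v.length) :
    (v.take p).rotate i <:+: v :=
  h.take_drop_eq_rotate hi ▸ (take_prefix p _).isInfix.trans (drop_suffix i v).isInfix

theorem isRotated_take_of_infix (h : IsPeriodOf v p) {w : List α} (hw : w <:+: v)
    (hl : w.length = p) : w ~r v.take p := by
  obtain ⟨s, t, hst⟩ := hw
  have hwin := h.take_drop_eq_rotate (i := s.length) (by rw [← hst]; simp; omega)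
  have hdrop : v.drop s.length = w ++ t := by rw [← hst, append_assoc, drop_left]
  rw [hdrop, take_left' hl] at hwin
  rw [hwin]
  exact IsRotated.forall _ _

theorem of_rotate_take_eq (h : IsPeriodOf v p) {d : ℕ} (hd0 : 0 < d) (hdp : d ≤ p)
    (hrot : (v.take p).rotate d = v.take p) : IsPeriodOf v d := by
  refine ⟨hd0, hdp.trans h.2.1, fun k hk => ?_⟩
  have hkp : k % p < (v.take p).length := by rw [h.take_length]; exact Nat.mod_lt _ h.1
  have hcyc := congrArg (·[k % p]?) hrot
  simp only [getElem?_rotate hkp, h.take_length, Nat.mod_add_mod,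
    getElem?_take_of_lt (Nat.mod_lt _ h.1)] at hcyc
  rw [h.getElem?_mod (by omega), h.getElem?_mod hk, hcyc]

end IsPeriodOf

theorem IsLeastPeriod.rotate_take_ne {α : Type*} {v : List α} {p d : ℕ} (h : IsLeastPeriod v p)
    (hd0 : 0 < d) (hdp : d < p) : (v.take p).rotate d ≠ v.take p := fun hrot =>
  (h.2 d (h.1.of_rotate_take_eq hd0 hdp.le hrot)).not_gt hdp

/-- Every repetition (a string whose smallest period `p` satisfies `2p ≤ |v|`) has a
unique L-root: exactly one string of length `p` that is a Lyndon word and is a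
substring of `v`. -/
theorem lroot_exists_unique {α : Type*} [LinearOrder α]
    (v : List α) (p : ℕ) (hp : IsLeastPeriod v p) (hrep : 2 * p ≤ v.length) :
    ∃! lam : List α, lam.length = p ∧ IsLyndon lam ∧ lam <:+: v := by
  have hlen := hp.1.take_length
  obtain ⟨m, hm, hlyn⟩ := exists_isLyndon_rotate (u := v.take p)
    (ne_nil_of_length_pos (by rw [hlen]; exact hp.1.1))
    fun k hk0 hk => hp.rotate_take_ne hk0 (hlen ▸ hk)
  refine ⟨(v.take p).rotate m, ⟨by rw [length_rotate, hlen], hlyn, ?_⟩, ?_⟩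
  · exact hp.1.rotate_take_infix (by omega)
  · rintro lam ⟨hl, hlam, hinf⟩
    exact hlam.eq_of_isRotated hlyn
      ((hp.1.isRotated_take_of_infix hinf hl).trans (IsRotated.forall _ _).symm)
end

section
/- For any non-empty string u, the L-root interval r_{u²} of the square u² = uu has length at least |u|, i.e., |r_{u²}| ≥ |u|. -/
/-- Subtraction step for Fine–Wilf: if `p` and `q` are periods with `q < p` and
`p + q ≤ |w|`, then `p - q` is a period. -/
lemma periodOf_sub {α : Type*} {w : List α} {p q : ℕ}
    (hp : IsPeriodOf w p) (hq : IsPeriodOf w q) (hlt : q < p)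
    (hsum : p + q ≤ w.length) : IsPeriodOf w (p - q) := by
  obtain ⟨hp1, hp2, hpP⟩ := hp
  obtain ⟨hq1, hq2, hqP⟩ := hq
  refine ⟨by omega, by omega, ?_⟩
  intro i hi
  by_cases hc : q ≤ i
  · have h1 : (i - q) + q < w.length := by omega
    have h2 : (i - q) + p < w.length := by omega
    have e1 := hqP (i - q) h1
    have e2 := hpP (i - q) h2
    have : i - q + q = i := by omega
    rw [this] at e1
    have : i - q + p = i + (p - q) := by omega
    rw [this] at e2
    rw [← e1, e2]
  · have h1 : i + p < w.length := by omega
    have e1 := hpP i h1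
    have h2 : (i + (p - q)) + q < w.length := by omega
    have e2 := hqP (i + (p - q)) h2
    have : i + (p - q) + q = i + p := by omega
    rw [this] at e2
    rw [e1, ← e2]

/-- Weak Fine–Wilf: if `p` and `q` are periods of `w` with `p + q ≤ |w|`,
then `gcd p q` is a period of `w`. -/
lemma periodOf_gcd {α : Type*} {w : List α} :
    ∀ n p q : ℕ, p + q ≤ n → IsPeriodOf w p → IsPeriodOf w q → p + q ≤ w.length →
      IsPeriodOf w (Nat.gcd p q) := by
  intro n
  induction n with
  | zero => intro p q h hp _ _; exact absurd hp.1 (by omega)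
  | succ n ih =>
    intro p q h hp hq hsum
    have hp1 : 1 ≤ p := hp.1
    have hq1 : 1 ≤ q := hq.1
    rcases lt_trichotomy p q with hlt | heq | hlt
    · have hsub := periodOf_sub hq hp hlt (by omega)
      have := ih p (q - p) (by omega) hp hsub (by omega)
      rwa [Nat.gcd_sub_self_right (le_of_lt hlt)] at this
    · subst heq; rwa [Nat.gcd_self]
    · have hsub := periodOf_sub hp hq hlt (by omega)
      have := ih (p - q) q (by omega) hsub hq (by omega)
      rwa [Nat.gcd_sub_self_left (le_of_lt hlt)] at this

lemma listPow_length {α : Type*} (x : List α) (k : ℕ) :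
    (listPow x k).length = k * x.length := by
  simp [listPow, List.length_flatten, Function.comp]

/-- For any non-empty string `u`, the L-root interval `r_{u²} = λᵏ` of the square
`u² = uu` — given by the decomposition `u² = x · λᵏ · y` where `λ` is the Lyndon word
whose length is the smallest period of `u²`, `x` is a proper suffix of `λ` and `y` is
a proper prefix of `λ` — has length at least `|u|`. -/
theorem lroot_interval_length_ge {α : Type*} [LinearOrder α]
    (u x y lam : List α) (k p : ℕ) (hu : u ≠ [])
    (hp : IsLeastPeriod (u ++ u) p)
    (hlyn : IsLyndon lam) (hlen : lam.length = p)
    (hx : x <:+ lam) (hxne : x ≠ lam) (hy : y <+: lam) (hyne : y ≠ lam)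
    (hdecomp : u ++ u = x ++ listPow lam k ++ y) :
    u.length ≤ (listPow lam k).length := by
  have hu1 : 1 ≤ u.length := List.length_pos_iff.mpr hu
  -- |u| is a period of u ++ u
  have hper_u : IsPeriodOf (u ++ u) u.length := by
    refine ⟨hu1, by simp, ?_⟩
    intro i hi
    have hi' : i < u.length := by simp at hi; omega
    rw [List.getElem?_append_left hi', List.getElem?_append_right (by omega)]
    congr 1
    omega
  obtain ⟨hpP, hpmin⟩ := hp
  have hple : p ≤ u.length := hpmin u.length hper_u
  -- gcd p |u| is a period, so by minimality p ∣ |u|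
  have hgcd : IsPeriodOf (u ++ u) (Nat.gcd p u.length) :=
    periodOf_gcd (p + u.length) p u.length le_rfl hpP hper_u (by simp; omega)
  have hdvd : p ∣ u.length := by
    have h1 : p ≤ Nat.gcd p u.length := hpmin _ hgcd
    have h2 : Nat.gcd p u.length ∣ u.length := Nat.gcd_dvd_right _ _
    have h3 : Nat.gcd p u.length ∣ p := Nat.gcd_dvd_left _ _
    have : Nat.gcd p u.length = p :=
      le_antisymm (Nat.le_of_dvd hpP.1 h3) h1
    rwa [← this]
  -- lengths from the decomposition
  have hlens : u.length + u.length = x.length + k * p + y.length := by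
    have := congrArg List.length hdecomp
    simp [listPow_length, hlen] at this
    omega
  have hxlt : x.length < p := by
    have hle := hx.length_le
    rcases lt_or_eq_of_le hle with h | h
    · omega
    · exact absurd (hx.eq_of_length h) hxne
  have hylt : y.length < p := by
    have hle := hy.length_le
    rcases lt_or_eq_of_le hle with h | h
    · omega
    · exact absurd (hy.eq_of_length h) hyne
  -- since p ∣ |u| and |x|+|y| < 2p with |x|+|y| ≡ 0 (mod p), we get |x|+|y| ≤ p
  obtain ⟨m, hm⟩ := hdvd
  have hm1 : 1 ≤ m := by
    rcases Nat.eq_zero_or_pos m with h | h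
    · subst h; rw [Nat.mul_zero] at hm; omega
    · exact h
  have hp1 : 1 ≤ p := hpP.1
  have key : k * p + (x.length + y.length) = 2 * (p * m) := by
    rw [hm] at hlens; linarith
  have hxy : x.length + y.length ≤ p := by
    by_contra hcon
    push_neg at hcon
    rcases le_or_gt k (2 * m - 2) with hk | hk
    · have h1 : k * p ≤ (2 * m - 2) * p := Nat.mul_le_mul_right p hk
      have h2 : (2 * m - 2) * p + 2 * p = 2 * (p * m) := by
        rw [Nat.sub_mul]
        have h3 : 2 * p ≤ 2 * m * p := by nlinarith
        have h4 : 2 * m * p = 2 * (p * m) := by ring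
        omega
      linarith
    · have h1 : (2 * m - 1) * p ≤ k * p := Nat.mul_le_mul_right p (by omega)
      have h2 : (2 * m - 1) * p + p = 2 * (p * m) := by
        rw [Nat.sub_mul, Nat.one_mul]
        have h3 : p ≤ 2 * m * p := by nlinarith
        have h4 : 2 * m * p = 2 * (p * m) := by ring
        omega
      linarith
  rw [listPow_length, hlen]
  linarith
end

section
/- Let w, z, λ be Lyndon words with w = zλ (so that this is the standard factorization of w into left factor z and right factor λ). If |z| ≤ |λ|, then z is not a suffix of λ. -/
theorem IsLyndon.eq_of_isPrefix_of_isSuffix {α : Type*} [LinearOrder α] {w u : List α}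
    (hw : IsLyndon w) (hu : u ≠ []) (hpre : u <+: w) (hsuf : u <:+ w) : u = w := by
  by_contra hne
  exact hpre.le (hw.2 u hsuf hu hne)

theorem left_factor_not_suffix_general {α : Type*} [LinearOrder α]
    (z lam : List α) (hz : IsLyndon z) (hlam : IsLyndon lam)
    (hw : IsLyndon (z ++ lam)) :
    ¬ z <:+ lam := by
  intro hsuf
  have hborder : z = z ++ lam :=
    hw.eq_of_isPrefix_of_isSuffix hz.1 (List.prefix_append z lam)
      (hsuf.trans (List.suffix_append z lam))
  exact hlam.1 (List.self_eq_append_right.mp hborder)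

/-- Let `w = z · λ` where `w`, `z`, `λ` are all Lyndon words (standard factorization).
If `|z| ≤ |λ|`, then `z` is not a suffix of `λ`. -/
theorem left_factor_not_suffix {α : Type*} [LinearOrder α]
    (z lam : List α) (hz : IsLyndon z) (hlam : IsLyndon lam)
    (hw : IsLyndon (z ++ lam)) (hlen : z.length ≤ lam.length) :
    ¬ z <:+ lam :=
  left_factor_not_suffix_general z lam hz hlam hw
end
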